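/- Let X, Z be independent standard Gaussians and let x ≥ 0. Then E[X³ σ'''(Xx+Z) σ''(Xx+Z)] ≤ 108x, where σ(y) = max{0,y³}. -/

import Mathlib

open MeasureTheory ProbabilityTheory Real
open scoped NNReal ENNReal

namespace NTKAux

lemma pdf_eq (t : ℝ) :
    gaussianPDFReal 0 1 t = (√(2 * π))⁻¹ * rexp (-(1/2) * t ^ 2) := by
  simp [gaussianPDFReal]
  ring_nf
  exact Or.inl trivial

lemma integral_gauss (g : ℝ → ℝ) :
    ∫ t, g t ∂(gaussianReal 0 1) = ∫ t, gaussianPDFReal 0 1 t * g t := by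
  rw [gaussianReal_of_var_ne_zero 0 one_ne_zero]
  have h : gaussianPDF 0 1 = fun t => ((Real.toNNReal (gaussianPDFReal 0 1 t) : ℝ≥0) : ℝ≥0∞) :=
    rfl
  rw [h, integral_withDensity_eq_integral_smul ((measurable_gaussianPDFReal 0 1).real_toNNReal)]
  congr 1
  ext t
  rw [NNReal.smul_def, Real.coe_toNNReal _ (gaussianPDFReal_nonneg 0 1 t), smul_eq_mul]

lemma integrable_gauss {g : ℝ → ℝ}
    (hg : Integrable (fun t => gaussianPDFReal 0 1 t * g t)) :
    Integrable g (gaussianReal 0 1) := by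
  rw [gaussianReal_of_var_ne_zero 0 one_ne_zero]
  have h : gaussianPDF 0 1 = fun t => ((Real.toNNReal (gaussianPDFReal 0 1 t) : ℝ≥0) : ℝ≥0∞) :=
    rfl
  rw [h]
  refine (integrable_withDensity_iff_integrable_smul
    ((measurable_gaussianPDFReal 0 1).real_toNNReal)).2 ?_
  refine hg.congr (Filter.Eventually.of_forall fun t => ?_)
  simp only [NNReal.smul_def, Real.coe_toNNReal _ (gaussianPDFReal_nonneg 0 1 t), smul_eq_mul]

lemma integrable_abs_pow (n : ℕ) :
    Integrable (fun t : ℝ => |t| ^ n) (gaussianReal 0 1) := by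
  apply integrable_gauss
  have h0 : Integrable (fun t : ℝ => t ^ (n : ℝ) * rexp (-(1/2) * t ^ 2)) :=
    integrable_rpow_mul_exp_neg_mul_sq (by norm_num)
      (lt_of_lt_of_le neg_one_lt_zero (Nat.cast_nonneg n))
  have h1 : Integrable (fun t : ℝ => |t| ^ n * rexp (-(1/2) * t ^ 2)) := by
    refine h0.abs.congr (Filter.Eventually.of_forall fun t => ?_)
    simp only [abs_mul, abs_exp, Real.rpow_natCast, abs_pow]
  refine (h1.const_mul ((√(2 * π))⁻¹)).congr (Filter.Eventually.of_forall fun t => ?_)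
  simp only [pdf_eq]
  ring

lemma integrable_pow (n : ℕ) :
    Integrable (fun t : ℝ => t ^ n) (gaussianReal 0 1) := by
  refine (integrable_abs_pow n).mono' ?_ (Filter.Eventually.of_forall fun t => ?_)
  · exact (measurable_id.pow_const n).aestronglyMeasurable
  · rw [Real.norm_eq_abs, ← pow_abs]

lemma map_neg_gauss :
    (gaussianReal 0 1).map (fun t : ℝ => -t) = gaussianReal 0 1 := by
  have h := gaussianReal_map_const_mul (μ := 0) (v := 1) (-1)
  have h2 : ((-1 : ℝ) * ·) = (fun t : ℝ => -t) := by funext t; ring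
  rw [h2] at h
  rw [h]
  norm_num

lemma integral_odd {g : ℝ → ℝ} (hm : AEStronglyMeasurable g (gaussianReal 0 1))
    (hodd : ∀ t, g (-t) = - g t) :
    ∫ t, g t ∂(gaussianReal 0 1) = 0 := by
  have h1 : ∫ t, g t ∂(gaussianReal 0 1) = ∫ t, g (-t) ∂(gaussianReal 0 1) := by
    conv_lhs => rw [← map_neg_gauss]
    rw [integral_map measurable_neg.aemeasurable]
    rw [map_neg_gauss]
    exact hm
  have h2 : ∫ t, g (-t) ∂(gaussianReal 0 1) = - ∫ t, g t ∂(gaussianReal 0 1) := by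
    simp only [hodd]
    exact integral_neg _
  linarith [h1, h2]

lemma integral_id : ∫ t, t ∂(gaussianReal 0 1) = 0 :=
  integral_odd measurable_id.aestronglyMeasurable (fun t => rfl)

lemma integral_cube : ∫ t, t ^ 3 ∂(gaussianReal 0 1) = 0 :=
  integral_odd (measurable_id.pow_const 3).aestronglyMeasurable (fun t => by ring)

lemma integral_Ioi_pow4 :
    ∫ t in Set.Ioi (0:ℝ), t ^ 4 * rexp (-(1/2) * t ^ 2)
      = (1/2 : ℝ) ^ (-(5/2) : ℝ) * (1/2) * Real.Gamma (5/2) := by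
  have h := integral_rpow_mul_exp_neg_mul_rpow (p := 2) (q := 4) (b := 1/2)
    (by norm_num) (by norm_num) (by norm_num)
  norm_num at h
  rw [← h]
  refine setIntegral_congr_fun measurableSet_Ioi (fun t _ => ?_)
  ring_nf

lemma gamma_five_half : Real.Gamma (5/2) = 3/4 * √π := by
  have h1 : Real.Gamma (5/2) = (3/2) * Real.Gamma (3/2) := by
    rw [show (5/2 : ℝ) = 3/2 + 1 by norm_num, Real.Gamma_add_one (by norm_num)]
  have h2 : Real.Gamma (3/2) = (1/2) * Real.Gamma (1/2) := by
    rw [show (3/2 : ℝ) = 1/2 + 1 by norm_num, Real.Gamma_add_one (by norm_num)]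
  rw [h1, h2, Real.Gamma_one_half_eq]
  ring

lemma half_rpow : (1/2 : ℝ) ^ (-(5/2) : ℝ) = 4 * √2 := by
  have h1 : (1/2 : ℝ) ^ (-(5/2) : ℝ) = (2:ℝ) ^ ((5:ℝ)/2) := by
    rw [one_div, ← Real.rpow_neg_one (2:ℝ), ← Real.rpow_mul (by norm_num : (0:ℝ) ≤ 2)]
    norm_num
  rw [h1, show ((5:ℝ)/2) = 2 + 1/2 by norm_num, Real.rpow_add (by norm_num),
    Real.rpow_two, ← Real.sqrt_eq_rpow]
  norm_num

lemma integral_pow4 : ∫ t, t ^ 4 ∂(gaussianReal 0 1) = 3 := by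
  rw [integral_gauss]
  have h1 : ∫ t : ℝ, gaussianPDFReal 0 1 t * t ^ 4
      = (√(2 * π))⁻¹ * ∫ t : ℝ, t ^ 4 * rexp (-(1/2) * t ^ 2) := by
    rw [← integral_const_mul]
    congr 1
    funext t
    rw [pdf_eq]
    ring
  have h2 : ∫ t : ℝ, t ^ 4 * rexp (-(1/2) * t ^ 2)
      = 2 * ∫ t in Set.Ioi (0:ℝ), t ^ 4 * rexp (-(1/2) * t ^ 2) := by
    rw [← integral_comp_abs (f := fun t => t ^ 4 * rexp (-(1/2) * t ^ 2))]
    congr 1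
    funext t
    rw [sq_abs, pow_abs, abs_of_nonneg (by positivity : (0:ℝ) ≤ t ^ 4)]
  rw [h1, h2, integral_Ioi_pow4, gamma_five_half, half_rpow]
  have hs2 : √(2 * π) = √2 * √π := Real.sqrt_mul (by norm_num) π
  rw [hs2]
  have h2p : (0:ℝ) < √2 := by positivity
  have hpp : (0:ℝ) < √π := Real.sqrt_pos.mpr Real.pi_pos
  field_simp

end NTKAux

open NTKAux

theorem ntk_bound_mixed (x : ℝ) (hx : 0 ≤ x) :
    (∫ p : ℝ × ℝ, (p.1) ^ 3 * (if 0 < p.1 * x + p.2 then (6:ℝ) else 0)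
        * (if 0 < p.1 * x + p.2 then 6 * (p.1 * x + p.2) else (0:ℝ))
        ∂((gaussianReal 0 1).prod (gaussianReal 0 1)))
      ≤ 108 * x := by
  set μ := gaussianReal 0 1 with hμ
  set ν := μ.prod μ with hν
  have hpt : (fun p : ℝ × ℝ => (p.1) ^ 3 * (if 0 < p.1 * x + p.2 then (6:ℝ) else 0)
        * (if 0 < p.1 * x + p.2 then 6 * (p.1 * x + p.2) else (0:ℝ)))
      = fun p : ℝ × ℝ => (18 * x) * (p.1 ^ 4 * 1) + 18 * (p.1 ^ 3 * p.2)
        + 18 * (p.1 ^ 3 * |p.1 * x + p.2|) := by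
    funext p
    by_cases h : 0 < p.1 * x + p.2
    · rw [if_pos h, if_pos h, abs_of_pos h]; ring
    · rw [if_neg h, if_neg h, abs_of_nonpos (not_lt.1 h)]; ring
  rw [hpt]
  have int4 : Integrable (fun t : ℝ => t ^ 4) μ := integrable_pow 4
  have int3 : Integrable (fun t : ℝ => t ^ 3) μ := integrable_pow 3
  have int1' : Integrable (fun t : ℝ => t) μ := by
    simpa using integrable_pow 1
  have intA : Integrable (fun p : ℝ × ℝ => p.1 ^ 4 * 1) ν :=
    int4.mul_prod (integrable_const 1)
  have intB : Integrable (fun p : ℝ × ℝ => p.1 ^ 3 * p.2) ν :=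
    int3.mul_prod int1'
  have intH : Integrable (fun p : ℝ × ℝ => p.1 ^ 3 * |p.1 * x + p.2|) ν := by
    have habs1 : Integrable (fun t : ℝ => |t|) μ := by
      simpa using integrable_abs_pow 1
    have hb : Integrable (fun p : ℝ × ℝ => x * (|p.1| ^ 4 * 1) + |p.1| ^ 3 * |p.2|) ν := by
      refine Integrable.add ?_ ?_
      · exact ((integrable_abs_pow 4).mul_prod (integrable_const 1)).const_mul x
      · exact (integrable_abs_pow 3).mul_prod habs1
    refine hb.mono' ?_ (Filter.Eventually.of_forall fun p => ?_)
    · apply Measurable.aestronglyMeasurable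
      fun_prop
    · rw [Real.norm_eq_abs, abs_mul, ← pow_abs, abs_abs]
      have h1 : |p.1 * x + p.2| ≤ |p.1| * x + |p.2| := by
        calc |p.1 * x + p.2| ≤ |p.1 * x| + |p.2| := abs_add_le _ _
        _ = |p.1| * x + |p.2| := by rw [abs_mul, abs_of_nonneg hx]
      nlinarith [abs_nonneg p.1, abs_nonneg p.2, pow_nonneg (abs_nonneg p.1) 3,
        pow_nonneg (abs_nonneg p.1) 4, abs_nonneg (p.1 * x + p.2)]
  have ha1 : Integrable (fun p : ℝ × ℝ => (18 * x) * (p.1 ^ 4 * 1)) ν := intA.const_mul _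
  have ha2 : Integrable (fun p : ℝ × ℝ => 18 * (p.1 ^ 3 * p.2)) ν := intB.const_mul _
  have ha : Integrable (fun p : ℝ × ℝ => (18 * x) * (p.1 ^ 4 * 1) + 18 * (p.1 ^ 3 * p.2)) ν :=
    ha1.add ha2
  have hb : Integrable (fun p : ℝ × ℝ => 18 * (p.1 ^ 3 * |p.1 * x + p.2|)) ν :=
    intH.const_mul _
  rw [integral_add ha hb, integral_add ha1 ha2,
    integral_const_mul, integral_const_mul, integral_const_mul]
  have e1 : ∫ p : ℝ × ℝ, p.1 ^ 4 * 1 ∂ν = 3 := by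
    rw [hν, integral_prod_mul (f := fun t : ℝ => t ^ 4) (g := fun _ : ℝ => (1:ℝ))]
    simp [hμ, integral_pow4]
  have e2 : ∫ p : ℝ × ℝ, p.1 ^ 3 * p.2 ∂ν = 0 := by
    rw [hν, integral_prod_mul (f := fun t : ℝ => t ^ 3) (g := fun t : ℝ => t)]
    simp [hμ, integral_cube]
  have e3 : ∫ p : ℝ × ℝ, p.1 ^ 3 * |p.1 * x + p.2| ∂ν = 0 := by
    have hmapν : ν.map (Prod.map (fun t : ℝ => -t) (fun t : ℝ => -t)) = ν := by
      rw [hν, ← Measure.map_prod_map _ _ measurable_neg measurable_neg, hμ, map_neg_gauss]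
    have hmeas : AEStronglyMeasurable (fun p : ℝ × ℝ => p.1 ^ 3 * |p.1 * x + p.2|) ν := by
      apply Measurable.aestronglyMeasurable; fun_prop
    have h1 : ∫ p : ℝ × ℝ, p.1 ^ 3 * |p.1 * x + p.2| ∂ν
        = ∫ p : ℝ × ℝ, (-p.1) ^ 3 * |(-p.1) * x + (-p.2)| ∂ν := by
      conv_lhs => rw [← hmapν]
      rw [integral_map (Measurable.prodMap measurable_neg measurable_neg).aemeasurable]
      · rfl
      · rw [hmapν]; exact hmeas
    have h2 : ∀ p : ℝ × ℝ, (-p.1) ^ 3 * |(-p.1) * x + (-p.2)|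
        = -(p.1 ^ 3 * |p.1 * x + p.2|) := by
      intro p
      rw [show (-p.1) * x + (-p.2) = -(p.1 * x + p.2) by ring, abs_neg]
      ring
    simp only [h2, integral_neg] at h1
    linarith
  rw [e1, e2, e3]
  nlinarith [hx]
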